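/- Let (Ω, μ) be a measure space, let W be a closed subspace of the real Hilbert space L²(μ), and suppose there is a constant C ≥ 0 such that every w ∈ W satisfies ‖w‖_{L^∞(μ)} ≤ C·‖w‖_{L²(μ)} (essential supremum norm). Let P denote the orthogonal projection of L²(μ) onto W. Then for every Ψ ∈ L¹(μ) ∩ L²(μ) one has ‖P(Ψ)‖_{L²(μ)} ≤ C·‖Ψ‖_{L¹(μ)} and ‖P(Ψ)‖_{L^∞(μ)} ≤ C²·‖Ψ‖_{L¹(μ)}; if moreover μ(Ω) < ∞, then also ‖P(Ψ)‖_{L¹(μ)} ≤ C²·μ(Ω)·‖Ψ‖_{L¹(μ)}. -/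

import Mathlib

open MeasureTheory ENNReal

/-!
`‖PΨ‖₂² = ⟪Ψ, PΨ⟫ ≤ ‖Ψ‖₁ ‖PΨ‖_∞ ≤ C ‖Ψ‖₁ ‖PΨ‖₂`, so `‖PΨ‖₂ ≤ C ‖Ψ‖₁`. Applying the
`L^∞`–`L²` bound once more to `PΨ ∈ W` gives the `L^∞` estimate, and on a finite measure
space `‖PΨ‖₁ ≤ μ(Ω) ‖PΨ‖_∞` gives the `L¹` estimate.
-/

section OrthogonalProjection

variable {𝕜 E : Type*} [RCLike 𝕜] [NormedAddCommGroup E] [InnerProductSpace 𝕜 E]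

theorem Submodule.norm_orthogonalProjectionOnto_le_of_re_inner_le (K : Submodule 𝕜 E)
    [K.HasOrthogonalProjection] (v : E) {B : ℝ} (hB : 0 ≤ B)
    (h : ∀ w ∈ K, RCLike.re (inner 𝕜 v w) ≤ B * ‖w‖) :
    ‖(K.orthogonalProjectionOnto v : E)‖ ≤ B := by
  set u := K.orthogonalProjectionOnto v
  have hsq : ‖(u : E)‖ * ‖(u : E)‖ ≤ B * ‖(u : E)‖ :=
    calc ‖(u : E)‖ * ‖(u : E)‖ = RCLike.re (inner 𝕜 (u : E) (u : E)) := by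
          rw [inner_self_eq_norm_mul_norm]
      _ = RCLike.re (inner 𝕜 v (u : E)) := by
          rw [← K.inner_orthogonalProjectionOnto_eq_of_mem_right u v, Submodule.coe_inner]
      _ ≤ B * ‖(u : E)‖ := h u u.2
  rcases (norm_nonneg (u : E)).eq_or_lt with h0 | h0
  · rw [← h0]; exact hB
  · exact le_of_mul_le_mul_right hsq h0

end OrthogonalProjection

namespace MeasureTheory

variable {α : Type*} [MeasurableSpace α] {μ : Measure α}

theorem eLpNorm_one_le_eLpNorm_top_mul_measure_univ {E : Type*} [NormedAddCommGroup E]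
    (f : α → E) : eLpNorm f 1 μ ≤ eLpNorm f ∞ μ * μ Set.univ := by
  simpa [eLpNorm_one_eq_lintegral_enorm, eLpNorm', eLpNorm_exponent_top] using
    eLpNorm'_le_eLpNormEssSup_mul_rpow_measure_univ (f := f) (μ := μ) one_pos

namespace L2

variable {𝕜 E : Type*} [RCLike 𝕜] [NormedAddCommGroup E] [InnerProductSpace 𝕜 E]

theorem enorm_inner_le_eLpNorm_one_mul_eLpNorm_top (f g : α →₂[μ] E) :
    ‖inner 𝕜 f g‖ₑ ≤ eLpNorm f 1 μ * eLpNorm g ∞ μ :=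
  calc ‖inner 𝕜 f g‖ₑ = ‖∫ a, inner 𝕜 (f a) (g a) ∂μ‖ₑ := by rw [inner_def]
    _ ≤ eLpNorm (fun a => inner 𝕜 (f a) (g a)) 1 μ := by
        rw [eLpNorm_one_eq_lintegral_enorm]; exact enorm_integral_le_lintegral_enorm _
    _ ≤ eLpNorm f 1 μ * eLpNorm g ∞ μ := by
        simpa using eLpNorm_le_eLpNorm_mul_eLpNorm_top 1 (Lp.aestronglyMeasurable f) g
          (fun x y => inner 𝕜 x y) 1 <| .of_forall fun a => by
            rw [one_mul]; exact nnnorm_inner_le_nnnorm (f a) (g a)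

theorem re_inner_le_of_eLpNorm_top_le {f g : α →₂[μ] E} (hf : eLpNorm f 1 μ ≠ ∞) {C : ℝ}
    (hC : 0 ≤ C) (hg : eLpNorm g ∞ μ ≤ ENNReal.ofReal (C * ‖g‖)) :
    RCLike.re (inner 𝕜 f g) ≤ C * (eLpNorm f 1 μ).toReal * ‖g‖ :=
  calc RCLike.re (inner 𝕜 f g) ≤ ‖inner 𝕜 f g‖ := RCLike.re_le_norm _
    _ = ‖inner 𝕜 f g‖ₑ.toReal := (toReal_enorm _).symm
    _ ≤ (eLpNorm f 1 μ * ENNReal.ofReal (C * ‖g‖)).toReal :=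
        toReal_mono (mul_ne_top hf ofReal_ne_top)
          ((enorm_inner_le_eLpNorm_one_mul_eLpNorm_top f g).trans (by gcongr))
    _ = C * (eLpNorm f 1 μ).toReal * ‖g‖ := by
        rw [toReal_mul, toReal_ofReal (by positivity)]; ring

end L2

end MeasureTheory

theorem projection_L1_bounds {Ω : Type*} [MeasurableSpace Ω] (μ : Measure Ω)
    (W : Submodule ℝ (Lp ℝ 2 μ))
    [CompleteSpace W]
    (C : ℝ) (hC : 0 ≤ C)
    (hbound : ∀ w : Lp ℝ 2 μ, w ∈ W → eLpNorm (⇑w) ∞ μ ≤ ENNReal.ofReal (C * ‖w‖))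
    (Ψ : Lp ℝ 2 μ) (hΨ : Integrable (⇑Ψ) μ) :
    ‖(Submodule.orthogonalProjectionOnto W Ψ : Lp ℝ 2 μ)‖ ≤ C * (eLpNorm (⇑Ψ) 1 μ).toReal ∧
    eLpNorm (⇑(Submodule.orthogonalProjectionOnto W Ψ : Lp ℝ 2 μ)) ∞ μ
      ≤ ENNReal.ofReal (C ^ 2 * (eLpNorm (⇑Ψ) 1 μ).toReal) ∧
    (μ Set.univ < ⊤ →
      eLpNorm (⇑(Submodule.orthogonalProjectionOnto W Ψ : Lp ℝ 2 μ)) 1 μ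
        ≤ ENNReal.ofReal (C ^ 2 * (μ Set.univ).toReal * (eLpNorm (⇑Ψ) 1 μ).toReal)) := by
  set w : Lp ℝ 2 μ := (W.orthogonalProjectionOnto Ψ : Lp ℝ 2 μ)
  have hL2 : ‖w‖ ≤ C * (eLpNorm Ψ 1 μ).toReal :=
    W.norm_orthogonalProjectionOnto_le_of_re_inner_le Ψ (by positivity) fun v hv =>
      L2.re_inner_le_of_eLpNorm_top_le (memLp_one_iff_integrable.2 hΨ).eLpNorm_ne_top hC
        (hbound v hv)
  have hLinf : eLpNorm w ∞ μ ≤ ENNReal.ofReal (C ^ 2 * (eLpNorm Ψ 1 μ).toReal) :=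
    (hbound w (W.orthogonalProjectionOnto Ψ).2).trans <| ofReal_le_ofReal <| by
      rw [sq, mul_assoc]; exact mul_le_mul_of_nonneg_left hL2 hC
  refine ⟨hL2, hLinf, fun hμ => ?_⟩
  calc eLpNorm w 1 μ ≤ eLpNorm w ∞ μ * μ Set.univ :=
        eLpNorm_one_le_eLpNorm_top_mul_measure_univ w
    _ ≤ ENNReal.ofReal (C ^ 2 * (eLpNorm Ψ 1 μ).toReal) * μ Set.univ := by gcongr
    _ = ENNReal.ofReal (C ^ 2 * (μ Set.univ).toReal * (eLpNorm Ψ 1 μ).toReal) := by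
        rw [mul_right_comm, ofReal_mul' (q := (μ Set.univ).toReal) toReal_nonneg,
          ofReal_toReal hμ.ne]
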